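/- arXiv:1503.05326 — 4 statements merged into one kernel-verified Lean document; each statement's English description precedes it below -/
import Mathlib

section
/- Let W be a Coxeter group and let t₁, ..., t_m be involutions in W such that whenever i ≠ j, t_i(N(t_j)) = N(t_j). Then N(t₁ t₂ ⋯ t_m) is the disjoint union of the sets N(t_i) for i = 1, ..., m. -/
/-!
Write `N(w)` for the positive roots that `w` sends to negative ones. If `w` maps `N(u)` onto
itself, then `N(u w) = N(u) ∪ N(w)`: a root `α ∈ N(w)` cannot be sent back to a positive root
by `u`, since otherwise `-w α ∈ N(u) = w N(u)` would force `-α` to be positive. Each later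
factor of `t₁ ⋯ t_m` stabilises `N(tᵢ)`, hence so does their product, and induction on `m` gives
the union; disjointness holds because `tᵢ` sends `N(tᵢ)` to negative roots but `N(tⱼ)` to itself.
-/

open Pointwise

section InversionSet

variable {W V : Type*} [DecidableEq V]

/-- `Pos` plays the role of the positive roots, so this is `N(w)`. -/
def inversionSet [SMul W V] (Pos : Finset V) (w : W) : Finset V :=
  Pos.filter fun α => w • α ∉ Pos

variable {Pos : Finset V}

@[simp]
theorem mem_inversionSet [SMul W V] {w : W} {α : V} :
    α ∈ inversionSet Pos w ↔ α ∈ Pos ∧ w • α ∉ Pos :=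
  Finset.mem_filter

@[simp]
theorem inversionSet_one [Monoid W] [MulAction W V] : inversionSet Pos (1 : W) = ∅ :=
  Finset.filter_false_of_mem fun α hα h => h ((one_smul W α).symm ▸ hα)

theorem disjoint_inversionSet_of_smul_eq [SMul W V] {u v : W}
    (h : u • inversionSet Pos v = inversionSet Pos v) :
    Disjoint (inversionSet Pos u) (inversionSet Pos v) := by
  rw [Finset.disjoint_left]
  intro α hαu hαv
  have : u • α ∈ inversionSet Pos v := h ▸ Finset.smul_mem_smul_finset hαv
  exact (mem_inversionSet.mp hαu).2 (mem_inversionSet.mp this).1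

variable [Group W] [AddGroup V] [DistribMulAction W V]

theorem inversionSet_mul_of_smul_eq
    (hroots : ∀ w : W, ∀ α ∈ Pos, w • α ∈ Pos ∨ -(w • α) ∈ Pos)
    (hdisj : ∀ α ∈ Pos, -α ∉ Pos) {u w : W}
    (hw : w • inversionSet Pos u = inversionSet Pos u) :
    inversionSet Pos (u * w) = inversionSet Pos u ∪ inversionSet Pos w := by
  have smul_mem_iff (β : V) : w • β ∈ inversionSet Pos u ↔ β ∈ inversionSet Pos u := by
    simpa only [hw] using Finset.smul_mem_smul_finset_iff (s := inversionSet Pos u) (b := β) w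
  ext α
  by_cases hα : α ∈ Pos
  swap
  · simp [hα]
  simp only [Finset.mem_union, mem_inversionSet, mul_smul, hα, true_and]
  by_cases hwα : w • α ∈ Pos
  · simpa [hα, hwα] using smul_mem_iff α
  · suffices u • w • α ∉ Pos by tauto
    intro huwα
    have hneg : w • -α ∈ inversionSet Pos u := by
      rw [smul_neg, mem_inversionSet, smul_neg]
      exact ⟨(hroots w α hα).resolve_left hwα, hdisj _ huwα⟩
    exact hdisj α hα (mem_inversionSet.mp ((smul_mem_iff _).mp hneg)).1

theorem inversionSet_list_prod [DecidableEq W]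
    (hroots : ∀ w : W, ∀ α ∈ Pos, w • α ∈ Pos ∨ -(w • α) ∈ Pos)
    (hdisj : ∀ α ∈ Pos, -α ∉ Pos) {l : List W}
    (hl : l.Pairwise fun u v => v • inversionSet Pos u = inversionSet Pos u) :
    inversionSet Pos l.prod = l.toFinset.biUnion (inversionSet Pos) := by
  induction l with
  | nil => simp
  | cons u l ih =>
    obtain ⟨hu, hl⟩ := List.pairwise_cons.mp hl
    have hprod : l.prod ∈ MulAction.stabilizer W (inversionSet Pos u) :=
      list_prod_mem fun v hv => MulAction.mem_stabilizer_iff.mpr (hu v hv)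
    rw [List.prod_cons, inversionSet_mul_of_smul_eq hroots hdisj hprod, ih hl,
      List.toFinset_cons, Finset.biUnion_insert]

end InversionSet

theorem stmt2_general {W V : Type*} [Group W] [DecidableEq V] [AddCommGroup V]
    [DistribMulAction W V]
    (Pos : Finset V)
    (hroots : ∀ (w : W), ∀ α ∈ Pos, w • α ∈ Pos ∨ -(w • α) ∈ Pos)
    (hdisj : ∀ α ∈ Pos, -α ∉ Pos)
    {m : ℕ} (t : Fin m → W)
    (hstab : ∀ i j, i ≠ j →
      (Pos.filter (fun α => t j • α ∉ Pos)).image (fun α => t i • α)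
        = Pos.filter (fun α => t j • α ∉ Pos)) :
    Pos.filter (fun α => (List.ofFn t).prod • α ∉ Pos)
      = Finset.univ.biUnion (fun i => Pos.filter (fun α => t i • α ∉ Pos))
    ∧ ∀ i j, i ≠ j → Disjoint (Pos.filter (fun α => t i • α ∉ Pos))
        (Pos.filter (fun α => t j • α ∉ Pos)) := by
  classical
  have hsmul (i j : Fin m) (hij : i ≠ j) :
      t i • inversionSet Pos (t j) = inversionSet Pos (t j) :=
    Finset.smul_finset_def.trans (hstab i j hij)
  refine ⟨?_, fun i j hij => disjoint_inversionSet_of_smul_eq (hsmul i j hij)⟩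
  have hpairwise : (List.ofFn t).Pairwise fun u v => v • inversionSet Pos u = inversionSet Pos u :=
    List.pairwise_ofFn.mpr fun i j hij => hsmul j i hij.ne'
  change inversionSet Pos _ = Finset.univ.biUnion (inversionSet Pos ∘ t)
  rw [inversionSet_list_prod hroots hdisj hpairwise]
  ext α
  simp [List.mem_ofFn]

theorem stmt2 {B W V : Type*} [Group W] [DecidableEq V] [AddCommGroup V]
    [DistribMulAction W V]
    (M : CoxeterMatrix B) (cs : CoxeterSystem M W)
    (Pos : Finset V)
    (hroots : ∀ (w : W), ∀ α ∈ Pos, w • α ∈ Pos ∨ -(w • α) ∈ Pos)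
    (hdisj : ∀ α ∈ Pos, -α ∉ Pos)
    {m : ℕ} (t : Fin m → W)
    (hinv : ∀ i, t i ≠ 1 ∧ t i * t i = 1)
    (hstab : ∀ i j, i ≠ j →
      (Pos.filter (fun α => t j • α ∉ Pos)).image (fun α => t i • α)
        = Pos.filter (fun α => t j • α ∉ Pos)) :
    Pos.filter (fun α => (List.ofFn t).prod • α ∉ Pos)
      = Finset.univ.biUnion (fun i => Pos.filter (fun α => t i • α ∉ Pos))
    ∧ ∀ i j, i ≠ j → Disjoint (Pos.filter (fun α => t i • α ∉ Pos))
        (Pos.filter (fun α => t j • α ∉ Pos)) :=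
  stmt2_general Pos hroots hdisj t hstab
end

section
/- Let W be the hyperoctahedral group of signed permutations of {1,...,n}, and let C be a conjugacy class of W with signed cycle type having negative cycle lengths λ₁ ≤ ⋯ ≤ λ_ν and z cycles in total. Then for every w ∈ C, the number of long positive roots e_i ± e_j (i < j) sent to negative roots by w is at least n − z + 2·Σ_{i=1}^{ν−1} (ν − i)λ_i. -/
/-- A permutation of `Fin n × Bool` is a signed permutation if it commutes with
the sign flip `(i, s) ↦ (i, !s)` (thinking of `(i, false)` as `+i` and `(i, true)` as `-i`). -/
def IsSignedPerm {n : ℕ} (w : Equiv.Perm (Fin n × Bool)) : Prop :=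
  ∀ p : Fin n × Bool, w (p.1, !p.2) = ((w p).1, !(w p).2)

/-- The natural (left) action of a signed permutation on vectors in `ℤⁿ`. -/
def act {n : ℕ} (w : Equiv.Perm (Fin n × Bool)) (v : Fin n → ℤ) : Fin n → ℤ :=
  fun j => if (w⁻¹ (j, false)).2 then -v (w⁻¹ (j, false)).1 else v (w⁻¹ (j, false)).1

/-- The long positive roots `e_i ± e_j`, `i < j`, of type `B_n`. -/
def longPos (n : ℕ) : Set (Fin n → ℤ) :=
  {v | ∃ i j : Fin n, i < j ∧
    (v = Pi.single i 1 + Pi.single j 1 ∨ v = Pi.single i 1 - Pi.single j 1)}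

/-- The short positive roots `e_i` of type `B_n`. -/
def shortPos (n : ℕ) : Set (Fin n → ℤ) :=
  {v | ∃ i : Fin n, v = Pi.single i 1}

/-- All positive roots of type `B_n`. -/
def posRoots (n : ℕ) : Set (Fin n → ℤ) := longPos n ∪ shortPos n

/-- `Λ(w)`: the long positive roots sent to negative roots by `w`. -/
def Lam {n : ℕ} (w : Equiv.Perm (Fin n × Bool)) : Set (Fin n → ℤ) :=
  {v ∈ longPos n | -(act w v) ∈ posRoots n}

/-- `Σ(w)`: the short positive roots sent to negative roots by `w`. -/
def Sig {n : ℕ} (w : Equiv.Perm (Fin n × Bool)) : Set (Fin n → ℤ) :=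
  {v ∈ shortPos n | -(act w v) ∈ posRoots n}

/-- The Coxeter length of `w` in type `B_n`: the number of positive roots sent negative. -/
noncomputable def BLen {n : ℕ} (w : Equiv.Perm (Fin n × Bool)) : ℕ :=
  Set.ncard {v ∈ posRoots n | -(act w v) ∈ posRoots n}

/-- The sign–flip permutation, i.e. the longest element `w₀ = -1` of `B_n`. -/
def negPerm (n : ℕ) : Equiv.Perm (Fin n × Bool) :=
  ⟨fun p => (p.1, !p.2), fun p => (p.1, !p.2),
    fun p => by cases p; simp, fun p => by cases p; simp⟩

/-!
A pair of signed letters `(x, y)` with `|x| ≠ |y|` stands for the long root `±e_|x| ± e_|y|`,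
which is negative iff the letter of smaller index is. The roots whose sign `w` changes are
`Λ(w) ∪ -Λ(w)`, each represented by two ordered pairs, so `4 |Λ(w)|` counts the ordered pairs
whose root changes sign under `w` ("flips").

Sort the flips by the cycles containing `|x|` and `|y|`. Let `i₀` be the smallest index of the
cycle(s) involved and `p` the length of its cycle; whenever a letter of a pair sits at `i₀`, the
root has the sign of that letter. The trajectories `k ↦ (w^k (±e_{i₀}), w^k y)`, `k < p`, are
pairwise disjoint. If the cycle of `i₀` is negative, `w^p (±e_{i₀}) = ∓e_{i₀}`, so each
trajectory contains a flip; letting `y` run over the letters of the other cycle, or of the same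
cycle away from `i₀`, yields `4 λ'` resp. `4 (λ - 1)` flips, `λ'` being the length of the other
cycle. If the cycle is positive, take `y = w^d (∓e_{i₀})` with `0 < d < p`: then `y` reaches
`∓e_{i₀}` at time `p - d` and both letters are back at time `p`, so each of these `2 (p - 1)`
trajectories contains two flips. Hence a cycle of length `λ` carries at least `λ - 1` roots of
`Λ(w)`, and two negative cycles of lengths `λ ≤ λ'` at least `2 λ` (the pairs with the roles of
the two cycles exchanged flip as often); summing gives the bound.
-/

open Finset Function

variable {n : ℕ} {w : Equiv.Perm (Fin n × Bool)} {c : Fin n → ℕ}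

lemma exists_mem_Ico_ne_succ {β : Type*} {g : ℕ → β} {a b : ℕ} (hab : a ≤ b)
    (h : g a ≠ g b) :
    ∃ k ∈ Ico a b, g k ≠ g (k + 1) := by
  induction b, hab using Nat.le_induction with
  | base => exact absurd rfl h
  | succ b hab ih =>
    by_cases hb : g a = g b
    · exact ⟨b, mem_Ico.2 ⟨hab, lt_add_one b⟩, hb ▸ h⟩
    · obtain ⟨k, hk, hne⟩ := ih hb
      exact ⟨k, Ico_subset_Ico_right (Nat.le_succ b) hk, hne⟩

lemma one_le_card_ne_succ {β : Type*} [DecidableEq β] {g : ℕ → β} {L : ℕ}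
    (h : g 0 ≠ g L) :
    1 ≤ #{k ∈ range L | g k ≠ g (k + 1)} := by
  obtain ⟨k, hk, hne⟩ := exists_mem_Ico_ne_succ (Nat.zero_le L) h
  exact card_pos.2 ⟨k, mem_filter.2 ⟨mem_range.2 (mem_Ico.1 hk).2, hne⟩⟩

lemma two_le_card_ne_succ {β : Type*} [DecidableEq β] {g : ℕ → β} {t L : ℕ} (htL : t ≤ L)
    (h₀ : g 0 ≠ g t) (h₁ : g t ≠ g L) : 2 ≤ #{k ∈ range L | g k ≠ g (k + 1)} := by
  obtain ⟨k₀, hk₀, hne₀⟩ := exists_mem_Ico_ne_succ (Nat.zero_le t) h₀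
  obtain ⟨k₁, hk₁, hne₁⟩ := exists_mem_Ico_ne_succ htL h₁
  rw [mem_Ico] at hk₀ hk₁
  calc 2 = #{k₀, k₁} := (card_pair (by omega)).symm
    _ ≤ _ := card_le_card <| by
      intro k hk
      rw [mem_insert, mem_singleton] at hk
      rcases hk with rfl | rfl
      exacts [mem_filter.2 ⟨mem_range.2 (by omega), hne₀⟩,
        mem_filter.2 ⟨mem_range.2 hk₁.2, hne₁⟩]

lemma card_filter_fst {α : Type*} [Fintype α] (P : α → Prop) [DecidablePred P] :
    #{y : α × Bool | P y.1} = 2 * #{i | P i} := by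
  rw [← univ_product_univ, filter_product_left, card_product, card_univ, Fintype.card_bool,
    mul_comm]

lemma sum_range_sum_range_eq {M : Type*} [AddCommMonoid M] (f : ℕ → ℕ → M) (z : ℕ) :
    ∑ s ∈ range z, ∑ t ∈ range z, f s t =
      ∑ t ∈ range z, (f t t + ∑ s ∈ range t, (f s t + f t s)) := by
  induction z with
  | zero => simp
  | succ z ih =>
    rw [sum_range_succ (fun t => f t t + _), ← ih, sum_range_succ]
    simp only [sum_range_succ, sum_add_distrib]
    abel

lemma sum_range_sum_range_lt (f : ℕ → ℤ) (ν : ℕ) :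
    ∑ t ∈ range ν, ∑ s ∈ range t, f s =
      ∑ j ∈ range (ν - 1), ((ν : ℤ) - 1 - j) * f j := by
  induction ν with
  | zero => simp
  | succ ν ih =>
    rw [sum_range_succ, ih]
    cases ν with
    | zero => simp
    | succ m =>
      simp only [add_tsub_cancel_right, sum_range_succ (fun s => f s)]
      push_cast
      rw [sum_range_succ (fun j => ((m : ℤ) + 1 + 1 - 1 - j) * f j)]
      rw [← add_assoc, ← sum_add_distrib]
      congr 1
      · exact sum_congr rfl fun j _ => by ring
      · ring

lemma sum_range_four_mul_sub_one_add_ite (f : ℕ → ℤ) {ν z : ℕ} (hνz : ν ≤ z) :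
    ∑ t ∈ range z, (4 * (f t - 1) + if t < ν then 8 * ∑ s ∈ range t, f s else 0) =
      4 * (∑ t ∈ range z, f t - z + 2 * ∑ t ∈ range ν, ∑ s ∈ range t, f s) := by
  rw [sum_add_distrib, ← mul_sum, sum_sub_distrib, ← sum_filter,
    show (range z).filter (· < ν) = range ν by ext; simp only [mem_filter, mem_range]; omega,
    ← mul_sum]
  simp only [sum_const, card_range, Int.nsmul_eq_mul, mul_one]
  ring

@[simp] lemma negPerm_apply (x : Fin n × Bool) : negPerm n x = (x.1, !x.2) := rfl

lemma isSignedPerm_iff_commute : IsSignedPerm w ↔ Commute w (negPerm n) := by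
  simp [IsSignedPerm, Commute, SemiconjBy, Equiv.ext_iff]

def absMap (w : Equiv.Perm (Fin n × Bool)) (i : Fin n) : Fin n := (w (i, false)).1

lemma class_iterate_absMap (hc : ∀ i, c (absMap w i) = c i) (k : ℕ) (i : Fin n) :
    c ((absMap w)^[k] i) = c i := by
  simpa using Semiconj.iterate_right (f := c) (gb := id) hc k i

namespace IsSignedPerm

lemma pow (hw : IsSignedPerm w) (k : ℕ) : IsSignedPerm (w ^ k) :=
  isSignedPerm_iff_commute.2 ((isSignedPerm_iff_commute.1 hw).pow_left k)

lemma apply_negPerm (hw : IsSignedPerm w) (x : Fin n × Bool) :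
    w (negPerm n x) = negPerm n (w x) :=
  hw x

lemma apply_mk (hw : IsSignedPerm w) (i : Fin n) (s : Bool) :
    w (i, s) = (absMap w i, xor s (w (i, false)).2) := by
  cases s
  · simp [absMap]
  · simpa [absMap] using hw (i, false)

lemma fst_apply (hw : IsSignedPerm w) (x : Fin n × Bool) : (w x).1 = absMap w x.1 := by
  rw [hw.apply_mk x.1 x.2]

lemma injective_absMap (hw : IsSignedPerm w) : Injective (absMap w) := by
  intro i j h
  have : w (j, xor (w (i, false)).2 (w (j, false)).2) = w (i, false) := by
    rw [hw.apply_mk, hw.apply_mk i false, h]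
    simp
  exact (congrArg Prod.fst (w.injective this)).symm

lemma fst_pow_apply (hw : IsSignedPerm w) (k : ℕ) (x : Fin n × Bool) :
    ((w ^ k) x).1 = (absMap w)^[k] x.1 := by
  induction k with
  | zero => rfl
  | succ k ih => rw [pow_succ', Equiv.Perm.mul_apply, hw.fst_apply, ih, iterate_succ_apply']

lemma fst_apply_ne (hw : IsSignedPerm w) {x y : Fin n × Bool} (h : x.1 ≠ y.1) :
    (w x).1 ≠ (w y).1 := by
  rw [hw.fst_apply, hw.fst_apply]
  exact hw.injective_absMap.ne h

lemma pow_apply_of_fst_eq (hw : IsSignedPerm w) {k : ℕ} {i : Fin n} {b : Bool}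
    (h : (w ^ k) (i, false) = (i, b)) (s : Bool) : (w ^ k) (i, s) = (i, xor s b) := by
  rw [(hw.pow k).apply_mk, absMap, h]

lemma class_fst_pow_apply (hw : IsSignedPerm w) (hc : ∀ i, c (absMap w i) = c i)
    (k : ℕ) (x : Fin n × Bool) : c ((w ^ k) x).1 = c x.1 := by
  rw [hw.fst_pow_apply, class_iterate_absMap hc]

end IsSignedPerm

/-- Letters `x`, `y` with `x.1 ≠ y.1` stand for the long root `±e_{x.1} ± e_{y.1}`, where the
sign of `e_i` is negative iff the `Bool` is `true`. The root is negative iff its coefficient of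
smaller index is, i.e. iff `leadSign x y = true`. -/
def leadSign (x y : Fin n × Bool) : Bool := if x.1 < y.1 then x.2 else y.2

lemma leadSign_of_lt {x y : Fin n × Bool} (h : x.1 < y.1) : leadSign x y = x.2 := if_pos h

lemma leadSign_comm {x y : Fin n × Bool} (h : x.1 ≠ y.1) : leadSign x y = leadSign y x := by
  rcases h.lt_or_gt with h | h <;> simp [leadSign, h, h.not_gt]

lemma leadSign_negPerm (x y : Fin n × Bool) :
    leadSign (negPerm n x) (negPerm n y) = !leadSign x y := by
  unfold leadSign; split_ifs <;> simp_all

def Flips (w : Equiv.Perm (Fin n × Bool)) (q : (Fin n × Bool) × (Fin n × Bool)) : Prop :=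
  q.1.1 ≠ q.2.1 ∧ leadSign (w q.1) (w q.2) ≠ leadSign q.1 q.2

instance : DecidablePred (Flips w) := fun _ => instDecidableAnd

def flipSet (w : Equiv.Perm (Fin n × Bool)) : Finset ((Fin n × Bool) × (Fin n × Bool)) :=
  {q | Flips w q}

lemma flips_swap (hw : IsSignedPerm w) (q : (Fin n × Bool) × (Fin n × Bool)) :
    Flips w q.swap ↔ Flips w q := by
  obtain ⟨x, y⟩ := q
  simp only [Flips, Prod.fst_swap, Prod.snd_swap]
  constructor <;> rintro ⟨hne, hflip⟩ <;> refine ⟨hne.symm, ?_⟩ <;>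
    rwa [leadSign_comm hne, leadSign_comm (hw.fst_apply_ne hne)] at hflip

lemma flips_map_negPerm (hw : IsSignedPerm w) (q : (Fin n × Bool) × (Fin n × Bool)) :
    Flips w (Prod.map (negPerm n) (negPerm n) q) ↔ Flips w q := by
  simp only [Flips, Prod.map_fst, Prod.map_snd, hw.apply_negPerm, leadSign_negPerm]
  simp

lemma flips_pow_iff (hw : IsSignedPerm w) {x y : Fin n × Bool} (hxy : x.1 ≠ y.1) (k : ℕ) :
    Flips w ((w ^ k) x, (w ^ k) y) ↔
      leadSign ((w ^ k) x) ((w ^ k) y) ≠ leadSign ((w ^ (k + 1)) x) ((w ^ (k + 1)) y) := by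
  simp only [Flips, pow_succ', Equiv.Perm.mul_apply, (hw.pow k).fst_apply_ne hxy, ne_eq,
    not_false_eq_true, true_and]
  exact ne_comm

def signedBasis (x : Fin n × Bool) : Fin n → ℤ := Pi.single x.1 (if x.2 then -1 else 1)

def pairRoot (q : (Fin n × Bool) × (Fin n × Bool)) : Fin n → ℤ :=
  signedBasis q.1 + signedBasis q.2

lemma act_add (u v : Fin n → ℤ) : act w (u + v) = act w u + act w v := by
  funext j
  simp only [act, Pi.add_apply]
  split_ifs <;> ring

lemma act_signedBasis (hw : IsSignedPerm w) (x : Fin n × Bool) :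
    act w (signedBasis x) = signedBasis (w x) := by
  funext j
  have hwu : w (w⁻¹ (j, false)) = (j, false) := by simp
  simp only [act]
  generalize w⁻¹ (j, false) = u at hwu ⊢
  obtain ⟨i, s⟩ := u
  rw [hw.apply_mk] at hwu
  obtain ⟨rfl, hs⟩ := Prod.mk.inj hwu
  obtain ⟨k, t⟩ := x
  simp only [signedBasis, hw.apply_mk k t, Pi.single_apply, hw.injective_absMap.eq_iff]
  by_cases hi : i = k
  · subst hi
    cases s <;> cases t <;> simp_all
  · simp [hi]

lemma signedBasis_negPerm (x : Fin n × Bool) : signedBasis (negPerm n x) = -signedBasis x := by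
  cases x with | mk i s => cases s <;> simp [signedBasis, Pi.single_neg]

lemma pairRoot_swap (q : (Fin n × Bool) × (Fin n × Bool)) : pairRoot q.swap = pairRoot q :=
  add_comm _ _

lemma pairRoot_mem_longPos {x y : Fin n × Bool} (hne : x.1 ≠ y.1) (hs : leadSign x y = false) :
    pairRoot (x, y) ∈ longPos n := by
  wlog h : x.1 < y.1 generalizing x y
  · rw [← pairRoot_swap]
    exact this hne.symm (by rwa [leadSign_comm hne.symm]) (hne.symm.lt_of_le (not_lt.1 h))
  obtain ⟨i, s⟩ := x
  obtain ⟨j, t⟩ := y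
  rw [leadSign_of_lt h] at hs
  subst hs
  refine ⟨i, j, h, ?_⟩
  cases t <;> simp [pairRoot, signedBasis, Pi.single_neg, sub_eq_add_neg]

lemma pairRoot_mem_Lam (hw : IsSignedPerm w) {q : (Fin n × Bool) × (Fin n × Bool)}
    (hq : Flips w q) (hs : leadSign q.1 q.2 = false) : pairRoot q ∈ Lam w := by
  obtain ⟨hne, hflip⟩ := hq
  refine ⟨pairRoot_mem_longPos hne hs, Or.inl ?_⟩
  have : -act w (pairRoot q) = pairRoot (negPerm n (w q.1), negPerm n (w q.2)) := by
    simp only [pairRoot, act_add, act_signedBasis hw, signedBasis_negPerm, neg_add]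
  rw [this]
  refine pairRoot_mem_longPos (hw.fst_apply_ne hne) ?_
  rw [leadSign_negPerm]
  simpa [hs] using hflip

lemma Lam_subset_range_pairRoot : Lam w ⊆ Set.range pairRoot := by
  rintro v ⟨⟨i, j, -, rfl | rfl⟩, -⟩
  · exact ⟨((i, false), (j, false)), by simp [pairRoot, signedBasis]⟩
  · exact ⟨((i, false), (j, true)),
      by simp [pairRoot, signedBasis, Pi.single_neg, sub_eq_add_neg]⟩

lemma support_pairRoot {q : (Fin n × Bool) × (Fin n × Bool)} (h : q.1.1 ≠ q.2.1) :
    support (pairRoot q) = {q.1.1, q.2.1} := by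
  ext k
  simp only [pairRoot, signedBasis, mem_support, Pi.add_apply, Pi.single_apply]
  split_ifs <;> simp_all

lemma eq_or_eq_swap_of_pairRoot_eq {q q' : (Fin n × Bool) × (Fin n × Bool)}
    (h : q.1.1 ≠ q.2.1) (h' : q'.1.1 ≠ q'.2.1) (he : pairRoot q = pairRoot q') :
    q' = q ∨ q' = q.swap := by
  have hsupp := support_pairRoot h
  rw [he, support_pairRoot h', Set.pair_eq_pair_iff] at hsupp
  obtain ⟨⟨i, s⟩, ⟨j, t⟩⟩ := q
  obtain ⟨⟨i', s'⟩, ⟨j', t'⟩⟩ := q'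
  simp only at h h' hsupp
  have hv := congrFun he
  simp only [pairRoot, signedBasis, Pi.add_apply, Pi.single_apply] at hv
  rcases hsupp with ⟨rfl, rfl⟩ | ⟨rfl, rfl⟩
  · have h1 := hv i'
    have h2 := hv j'
    cases s <;> cases t <;> cases s' <;> cases t' <;> simp_all
  · have h1 := hv i'
    have h2 := hv j'
    cases s <;> cases t <;> cases s' <;> cases t' <;> simp_all

lemma map_negPerm_involutive : Involutive (Prod.map (negPerm n) (negPerm n)) := fun q => by
  simp [Prod.map]

def posPair (q : (Fin n × Bool) × (Fin n × Bool)) : (Fin n × Bool) × (Fin n × Bool) :=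
  if leadSign q.1 q.2 then Prod.map (negPerm n) (negPerm n) q else q

lemma posPair_eq_or (q : (Fin n × Bool) × (Fin n × Bool)) :
    posPair q = q ∨ posPair q = Prod.map (negPerm n) (negPerm n) q := by
  unfold posPair
  split_ifs <;> simp

lemma leadSign_posPair (q : (Fin n × Bool) × (Fin n × Bool)) :
    leadSign (posPair q).1 (posPair q).2 = false := by
  unfold posPair
  split_ifs with h
  · rw [Prod.map_fst, Prod.map_snd, leadSign_negPerm, h, Bool.not_true]
  · simpa using h

lemma card_flipSet_le (hw : IsSignedPerm w) : #(flipSet w) ≤ 4 * (Lam w).ncard := by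
  have hflips : ∀ q ∈ flipSet w, Flips w (posPair q) := by
    intro q hq
    rw [flipSet, mem_filter] at hq
    rcases posPair_eq_or q with h | h <;> rw [h]
    exacts [hq.2, (flips_map_negPerm hw q).2 hq.2]
  have hfib : ∀ v ∈ (flipSet w).image (pairRoot ∘ posPair),
      #{q ∈ flipSet w | (pairRoot ∘ posPair) q = v} ≤ 4 := by
    intro v hv
    obtain ⟨q₀, hq₀, rfl⟩ := mem_image.1 hv
    refine (card_le_card ?_).trans (card_le_four (a := posPair q₀) (b := (posPair q₀).swap)
      (c := Prod.map (negPerm n) (negPerm n) (posPair q₀))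
      (d := Prod.map (negPerm n) (negPerm n) (posPair q₀).swap))
    intro q hq
    rw [mem_filter, comp_apply] at hq
    have hr := eq_or_eq_swap_of_pairRoot_eq (hflips q₀ hq₀).1 (hflips q hq.1).1 hq.2.symm
    rcases posPair_eq_or q with h | h <;> rw [h] at hr <;> rcases hr with hr | hr <;>
      simp [← hr, map_negPerm_involutive _]
  calc #(flipSet w) ≤ 4 * #((flipSet w).image (pairRoot ∘ posPair)) :=
        card_le_mul_card_image _ 4 hfib
    _ ≤ 4 * (Lam w).ncard := by
      gcongr
      rw [← Set.ncard_coe_finset]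
      refine Set.ncard_le_ncard ?_ ((Set.finite_range pairRoot).subset Lam_subset_range_pairRoot)
      simp only [coe_image, Set.image_subset_iff]
      exact fun q hq => pairRoot_mem_Lam hw (hflips q hq) (leadSign_posPair q)

def flipBlock (w : Equiv.Perm (Fin n × Bool)) (c : Fin n → ℕ) (s t : ℕ) :
    Finset ((Fin n × Bool) × (Fin n × Bool)) :=
  {q ∈ flipSet w | (c q.1.1, c q.2.1) = (s, t)}

lemma card_flipBlock_comm (hw : IsSignedPerm w) (s t : ℕ) :
    #(flipBlock w c s t) = #(flipBlock w c t s) := by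
  refine card_nbij' Prod.swap Prod.swap ?_ ?_ (fun _ _ => rfl) (fun _ _ => rfl) <;>
  · intro q hq
    simp only [flipBlock, flipSet, mem_coe, mem_filter, mem_univ, true_and, Prod.mk.injEq,
      Prod.fst_swap, Prod.snd_swap, flips_swap hw] at hq ⊢
    tauto

lemma sum_sum_card_flipBlock_le (hw : IsSignedPerm w) {z : ℕ}
    (hcz : ∀ i, c i < z) :
    ∑ s ∈ range z, ∑ t ∈ range z, (#(flipBlock w c s t) : ℤ) ≤ 4 * (Lam w).ncard := by
  have := card_flipSet_le hw
  rw [card_eq_sum_card_fiberwise (f := fun q => (c q.1.1, c q.2.1)) (t := range z ×ˢ range z)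
    fun q _ => mem_product.2 ⟨mem_range.2 (hcz _), mem_range.2 (hcz _)⟩, sum_product] at this
  exact_mod_cast this

lemma mul_card_le_card_flipBlock (hw : IsSignedPerm w) (hc : ∀ i, c (absMap w i) = c i)
    {i₀ : Fin n} {t m : ℕ} (T : Finset ((Fin n × Bool) × (Fin n × Bool)))
    (hT : ∀ q ∈ T, q.1.1 = i₀ ∧ c q.2.1 = t)
    (hm : ∀ q ∈ T, m ≤ #{k ∈ range (minimalPeriod (absMap w) i₀) |
      Flips w ((w ^ k) q.1, (w ^ k) q.2)}) :
    m * #T ≤ #(flipBlock w c (c i₀) t) := by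
  set p := minimalPeriod (absMap w) i₀
  let F : ((Fin n × Bool) × (Fin n × Bool)) × ℕ → (Fin n × Bool) × (Fin n × Bool) :=
    fun qk => ((w ^ qk.2) qk.1.1, (w ^ qk.2) qk.1.2)
  calc m * #T ≤ ∑ q ∈ T, #{k ∈ range p | Flips w (F (q, k))} := by
        rw [mul_comm, ← smul_eq_mul, ← sum_const]
        exact sum_le_sum hm
    _ = #{qk ∈ T ×ˢ range p | Flips w (F qk)} := by
        simp only [card_filter, sum_product]
    _ ≤ #(flipBlock w c (c i₀) t) := by
        refine card_le_card_of_injOn F (fun qk hqk => ?_) (fun qk hqk qk' hqk' he => ?_)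
        · rw [mem_coe, mem_filter, mem_product, mem_range] at hqk
          obtain ⟨⟨hq, -⟩, hflip⟩ := hqk
          simp only [flipBlock, flipSet, mem_coe, mem_filter, mem_univ, true_and, Prod.mk.injEq,
            F, hw.class_fst_pow_apply hc, hflip, (hT _ hq).1, (hT _ hq).2]
        · rw [mem_coe, mem_filter, mem_product, mem_range] at hqk hqk'
          obtain ⟨⟨hq, hk⟩, -⟩ := hqk
          obtain ⟨⟨hq', hk'⟩, -⟩ := hqk'
          obtain ⟨h₁, h₂⟩ := Prod.mk.inj he
          have hkk : qk.2 = qk'.2 := by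
            have := congrArg Prod.fst h₁
            rw [hw.fst_pow_apply, hw.fst_pow_apply, (hT _ hq).1, (hT _ hq').1] at this
            exact iterate_injOn_Iio_minimalPeriod hk hk' this
          simp only [hkk] at h₁ h₂
          exact Prod.ext (Prod.ext ((w ^ qk'.2).injective h₁) ((w ^ qk'.2).injective h₂)) hkk

lemma two_mul_card_le_card_flipBlock_of_neg (hw : IsSignedPerm w)
    (hc : ∀ i, c (absMap w i) = c i) {i₀ : Fin n} {t : ℕ}
    (hneg : (w ^ minimalPeriod (absMap w) i₀) (i₀, false) = (i₀, true))
    (Y : Finset (Fin n × Bool))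
    (hY : ∀ y ∈ Y,
      c y.1 = t ∧ i₀ < y.1 ∧ i₀ < ((w ^ minimalPeriod (absMap w) i₀) y).1) :
    2 * #Y ≤ #(flipBlock w c (c i₀) t) := by
  let T := ((univ : Finset Bool) ×ˢ Y).image fun sy => ((i₀, sy.1), sy.2)
  have hT : #T = 2 * #Y := by
    rw [card_image_of_injective _ (fun a b h => by simpa [Prod.ext_iff] using h), card_product,
      card_univ, Fintype.card_bool]
  rw [← hT, ← one_mul #T]
  refine mul_card_le_card_flipBlock hw hc T (fun q hq => ?_) (fun q hq => ?_)
  all_goals obtain ⟨⟨s, y⟩, hsy, rfl⟩ := mem_image.1 hq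
  all_goals obtain ⟨hyt, hy, hpy⟩ := hY y (mem_product.1 hsy).2
  · exact ⟨rfl, hyt⟩
  rw [filter_congr fun k _ => flips_pow_iff hw hy.ne k]
  apply one_le_card_ne_succ
  rw [pow_zero, Equiv.Perm.one_apply, Equiv.Perm.one_apply, hw.pow_apply_of_fst_eq hneg,
    leadSign_of_lt hy, leadSign_of_lt hpy]
  simp

lemma four_mul_le_card_flipBlock_of_pos (hw : IsSignedPerm w)
    (hc : ∀ i, c (absMap w i) = c i) {i₀ : Fin n}
    (hpos : (w ^ minimalPeriod (absMap w) i₀) (i₀, false) = (i₀, false))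
    (hmin : ∀ k, i₀ ≤ (absMap w)^[k] i₀) :
    4 * (minimalPeriod (absMap w) i₀ - 1) ≤ #(flipBlock w c (c i₀) (c i₀)) := by
  set p := minimalPeriod (absMap w) i₀
  have hfar : ∀ k, 0 < k → k < p → i₀ < (absMap w)^[k] i₀ := fun k hk hkp =>
    (hmin k).lt_of_ne fun h =>
      hk.ne' ((iterate_eq_iterate_iff_of_lt_minimalPeriod hkp (hk.trans hkp)).1 h.symm)
  let T := ((univ : Finset Bool) ×ˢ Ioo 0 p).image
    fun sd => ((i₀, sd.1), (w ^ sd.2) (i₀, !sd.1))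
  have hT : #T = 2 * (p - 1) := by
    rw [card_image_of_injOn, card_product, card_univ, Fintype.card_bool, Nat.card_Ioo,
      Nat.sub_zero]
    rintro ⟨s, d⟩ hsd ⟨s', d'⟩ hsd' he
    simp only [coe_product, Set.mem_prod, coe_Ioo, Set.mem_Ioo] at hsd hsd'
    obtain ⟨h₁, h₂⟩ := Prod.mk.inj he
    obtain rfl : s = s' := congrArg Prod.snd h₁
    have := congrArg Prod.fst h₂
    rw [hw.fst_pow_apply, hw.fst_pow_apply] at this
    rw [iterate_injOn_Iio_minimalPeriod hsd.2.2 hsd'.2.2 this]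
  rw [show 4 * (p - 1) = 2 * #T by rw [hT]; ring]
  refine mul_card_le_card_flipBlock hw hc T (fun q hq => ?_) (fun q hq => ?_)
  all_goals obtain ⟨⟨s, d⟩, hsd, rfl⟩ := mem_image.1 hq
  · exact ⟨rfl, hw.class_fst_pow_apply hc d _⟩
  obtain ⟨hd, hdp⟩ := mem_Ioo.1 (mem_product.1 hsd).2
  have hy : i₀ < ((w ^ d) (i₀, !s)).1 := by rw [hw.fst_pow_apply]; exact hfar d hd hdp
  have hx : i₀ < ((w ^ (p - d)) (i₀, s)).1 := by
    rw [hw.fst_pow_apply]; exact hfar _ (by omega) (by omega)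
  rw [filter_congr fun k _ => flips_pow_iff hw hy.ne k]
  refine two_le_card_ne_succ (t := p - d) (Nat.sub_le p d) ?_ ?_
  all_goals
    simp only [← Equiv.Perm.mul_apply, ← pow_add, Nat.sub_add_cancel hdp.le, pow_zero,
      Equiv.Perm.one_apply, hw.pow_apply_of_fst_eq hpos, Bool.xor_false]
  · rw [leadSign_of_lt hy, leadSign_comm hx.ne', leadSign_of_lt hx]
    simp
  · rw [add_comm, pow_add, Equiv.Perm.mul_apply, hw.pow_apply_of_fst_eq hpos,
      hw.pow_apply_of_fst_eq hpos, Bool.xor_false, Bool.xor_false,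
      leadSign_comm hx.ne', leadSign_of_lt hx, leadSign_of_lt hy]
    simp

lemma image_range_minimalPeriod (hw : IsSignedPerm w) (hc : ∀ i, c (absMap w i) = c i)
    (hcyc : ∀ i j, c i = c j → ∃ m, (absMap w)^[m] i = j) (i : Fin n) :
    (range (minimalPeriod (absMap w) i)).image (fun k => (absMap w)^[k] i) =
      ({j | c j = c i} : Finset (Fin n)) := by
  ext j
  simp only [mem_image, mem_range, mem_filter, mem_univ, true_and]
  constructor
  · rintro ⟨k, -, rfl⟩
    exact class_iterate_absMap hc k i
  · intro hj
    obtain ⟨m, rfl⟩ := hcyc i j hj.symm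
    exact ⟨m % _, Nat.mod_lt _ (minimalPeriod_pos_of_mem_periodicPts
      (hw.injective_absMap.mem_periodicPts i)), iterate_mod_minimalPeriod_eq⟩

lemma card_class_eq_minimalPeriod (hw : IsSignedPerm w) (hc : ∀ i, c (absMap w i) = c i)
    (hcyc : ∀ i j, c i = c j → ∃ m, (absMap w)^[m] i = j) (i : Fin n) :
    #{j | c j = c i} = minimalPeriod (absMap w) i := by
  rw [← image_range_minimalPeriod hw hc hcyc, card_image_of_injOn, card_range]
  simpa using iterate_injOn_Iio_minimalPeriod

lemma snd_pow_apply_eq_true_iff (hw : IsSignedPerm w) (i : Fin n) (k : ℕ) :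
    ((w ^ k) (i, false)).2 = true ↔
      Odd #{a ∈ range k | (w ((absMap w)^[a] i, false)).2 = true} := by
  induction k with
  | zero => simp
  | succ k ih =>
    have hk : (w ^ (k + 1)) (i, false) = w ((absMap w)^[k] i, ((w ^ k) (i, false)).2) := by
      rw [pow_succ', Equiv.Perm.mul_apply]
      exact congrArg w (Prod.ext (hw.fst_pow_apply k _) rfl)
    rw [hk, hw.apply_mk, range_add_one, filter_insert]
    split_ifs with h
    · rw [card_insert_of_notMem (by simp), Nat.odd_add_one, ← ih, h]
      simp
    · rw [← ih]
      simp_all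

lemma pow_minimalPeriod_apply_of_odd (hw : IsSignedPerm w) (hc : ∀ i, c (absMap w i) = c i)
    (hcyc : ∀ i j, c i = c j → ∃ m, (absMap w)^[m] i = j) {i : Fin n}
    (hodd : Odd #{j | c j = c i ∧ (w (j, false)).2 = true}) :
    (w ^ minimalPeriod (absMap w) i) (i, false) = (i, true) := by
  refine Prod.ext ?_ ((snd_pow_apply_eq_true_iff hw i _).2 ?_)
  · rw [hw.fst_pow_apply]
    exact iterate_minimalPeriod
  · rwa [← filter_filter, ← image_range_minimalPeriod hw hc hcyc, filter_image,
      card_image_of_injOn] at hodd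
    exact iterate_injOn_Iio_minimalPeriod.mono fun k hk => mem_range.1 (mem_filter.1 hk).1

lemma four_mul_le_card_flipBlock_self (hw : IsSignedPerm w) (hc : ∀ i, c (absMap w i) = c i)
    (hcyc : ∀ i j, c i = c j → ∃ m, (absMap w)^[m] i = j) (t : ℕ) :
    4 * ((#{i | c i = t} : ℤ) - 1) ≤ #(flipBlock w c t t) := by
  rcases (univ.filter fun i => c i = t).eq_empty_or_nonempty with h | hne
  · rw [h, card_empty]
    omega
  set i₀ := min' _ hne
  have hi₀ : c i₀ = t := (mem_filter.1 (min'_mem _ hne)).2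
  have hmin : ∀ j, c j = c i₀ → i₀ ≤ j := fun j hj =>
    min'_le _ j (mem_filter.2 ⟨mem_univ _, hj.trans hi₀⟩)
  rw [← hi₀, card_class_eq_minimalPeriod hw hc hcyc]
  clear_value i₀
  set p := minimalPeriod (absMap w) i₀
  have hp : 1 ≤ p :=
    minimalPeriod_pos_of_mem_periodicPts (hw.injective_absMap.mem_periodicPts i₀)
  have hfst : ((w ^ p) (i₀, false)).1 = i₀ := by
    rw [hw.fst_pow_apply]
    exact iterate_minimalPeriod
  suffices 4 * (p - 1) ≤ #(flipBlock w c (c i₀) (c i₀)) by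
    zify [hp] at this
    exact this
  cases hb : ((w ^ p) (i₀, false)).2
  · exact four_mul_le_card_flipBlock_of_pos hw hc (Prod.ext hfst hb)
      fun k => hmin _ (class_iterate_absMap hc k i₀)
  · have hY := two_mul_card_le_card_flipBlock_of_neg hw hc (Prod.ext hfst hb) (t := c i₀)
      {y | c y.1 = c i₀ ∧ y.1 ≠ i₀} fun y hy => ?_
    · rwa [card_filter_fst (fun j => c j = c i₀ ∧ j ≠ i₀), ← filter_filter, filter_ne',
        card_erase_of_mem (by simp), card_class_eq_minimalPeriod hw hc hcyc, ← mul_assoc] at hY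
    · obtain ⟨hyc, hyi⟩ := (mem_filter.1 hy).2
      refine ⟨hyc, (hmin _ hyc).lt_of_ne' hyi, (hmin _ ?_).lt_of_ne' ?_⟩
      · rw [hw.class_fst_pow_apply hc, hyc]
      · rw [hw.fst_pow_apply]
        intro h
        exact hyi ((hw.injective_absMap.iterate p) (h.trans iterate_minimalPeriod.symm))

lemma four_mul_card_le_card_flipBlock_of_neg (hw : IsSignedPerm w)
    (hc : ∀ i, c (absMap w i) = c i) {i₀ : Fin n}
    (hneg : (w ^ minimalPeriod (absMap w) i₀) (i₀, false) = (i₀, true)) {t : ℕ}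
    (hmin : ∀ j, c j = t → i₀ < j) :
    4 * #{j | c j = t} ≤ #(flipBlock w c (c i₀) t) := by
  have := two_mul_card_le_card_flipBlock_of_neg hw hc hneg (t := t) {y | c y.1 = t} fun y hy => ?_
  · rwa [card_filter_fst (fun j => c j = t), ← mul_assoc] at this
  · have hyc := (mem_filter.1 hy).2
    exact ⟨hyc, hmin _ hyc, hmin _ (by rw [hw.class_fst_pow_apply hc, hyc])⟩

lemma four_mul_min_le_card_flipBlock (hw : IsSignedPerm w) (hc : ∀ i, c (absMap w i) = c i)
    (hcyc : ∀ i j, c i = c j → ∃ m, (absMap w)^[m] i = j) {s t : ℕ} (hst : s ≠ t)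
    (hs : Odd #{i | c i = s ∧ (w (i, false)).2 = true})
    (ht : Odd #{i | c i = t ∧ (w (i, false)).2 = true}) :
    4 * min #{i | c i = s} #{i | c i = t} ≤ #(flipBlock w c s t) := by
  have hne : ({i | c i = s ∨ c i = t} : Finset (Fin n)).Nonempty := by
    obtain ⟨i, hi⟩ := card_pos.1 hs.pos
    exact ⟨i, mem_filter.2 ⟨mem_univ _, Or.inl (mem_filter.1 hi).2.1⟩⟩
  set i₀ := min' _ hne
  have hmin : ∀ j, c j ≠ c i₀ → (c j = s ∨ c j = t) → i₀ < j := fun j hj hjst =>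
    (min'_le _ j (mem_filter.2 ⟨mem_univ _, hjst⟩)).lt_of_ne fun h => hj (congrArg c h).symm
  have hneg : ∀ {u}, c i₀ = u → Odd #{i | c i = u ∧ (w (i, false)).2 = true} →
      (w ^ minimalPeriod (absMap w) i₀) (i₀, false) = (i₀, true) := by
    rintro u rfl h
    exact pow_minimalPeriod_apply_of_odd hw hc hcyc h
  rcases (mem_filter.1 (min'_mem _ hne)).2 with h | h
  · calc 4 * min #{i | c i = s} #{i | c i = t} ≤ 4 * #{i | c i = t} := by
          gcongr; exact min_le_right _ _
      _ ≤ #(flipBlock w c (c i₀) t) := four_mul_card_le_card_flipBlock_of_neg hw hc (hneg h hs)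
          fun j hj => hmin j (by rw [hj, h]; exact hst.symm) (Or.inr hj)
      _ = _ := by rw [h]
  · calc 4 * min #{i | c i = s} #{i | c i = t} ≤ 4 * #{i | c i = s} := by
          gcongr; exact min_le_left _ _
      _ ≤ #(flipBlock w c (c i₀) s) := four_mul_card_le_card_flipBlock_of_neg hw hc (hneg h ht)
          fun j hj => hmin j (by rw [hj, h]; exact hst) (Or.inl hj)
      _ = _ := by rw [h, card_flipBlock_comm hw]

lemma row_le_card_flipBlock (hw : IsSignedPerm w) (hc : ∀ i, c (absMap w i) = c i)
    (hcyc : ∀ i j, c i = c j → ∃ m, (absMap w)^[m] i = j)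
    {ν : ℕ} (hodd : ∀ t < ν, Odd #{i | c i = t ∧ (w (i, false)).2 = true})
    (hsort : ∀ s t, s ≤ t → t < ν → #{i | c i = s} ≤ #{i | c i = t}) (t : ℕ) :
    4 * ((#{i | c i = t} : ℤ) - 1) +
        (if t < ν then 8 * ∑ s ∈ range t, (#{i | c i = s} : ℤ) else 0) ≤
      #(flipBlock w c t t) +
        ∑ s ∈ range t, ((#(flipBlock w c s t) : ℤ) + #(flipBlock w c t s)) := by
  have hdiag := four_mul_le_card_flipBlock_self hw hc hcyc t
  split_ifs with ht
  · refine add_le_add hdiag ?_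
    rw [mul_sum]
    refine sum_le_sum fun s hs => ?_
    have hst := mem_range.1 hs
    have h := four_mul_min_le_card_flipBlock hw hc hcyc hst.ne (hodd s (hst.trans ht)) (hodd t ht)
    rw [min_eq_left (hsort s t hst.le ht)] at h
    have := card_flipBlock_comm (c := c) hw s t
    omega
  · have : 0 ≤ ∑ s ∈ range t, ((#(flipBlock w c s t) : ℤ) + #(flipBlock w c t s)) :=
      sum_nonneg fun _ _ => by positivity
    linarith

lemma le_ncard_Lam (hw : IsSignedPerm w) (hc : ∀ i, c (absMap w i) = c i)
    (hcyc : ∀ i j, c i = c j → ∃ m, (absMap w)^[m] i = j)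
    {z ν : ℕ} (hcz : ∀ i, c i < z) (hνz : ν ≤ z)
    (hodd : ∀ t < ν, Odd #{i | c i = t ∧ (w (i, false)).2 = true})
    (hsort : ∀ s t, s ≤ t → t < ν → #{i | c i = s} ≤ #{i | c i = t}) :
    (n : ℤ) - z + 2 * ∑ t ∈ range ν, ∑ s ∈ range t, (#{i | c i = s} : ℤ) ≤
      (Lam w).ncard := by
  have hn : ∑ t ∈ range z, (#{i | c i = t} : ℤ) = n := by
    rw [← Nat.cast_sum, ← card_eq_sum_card_fiberwise fun i _ => mem_range.2 (hcz i), card_univ,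
      Fintype.card_fin]
  have := calc
    4 * ((n : ℤ) - z + 2 * ∑ t ∈ range ν, ∑ s ∈ range t, (#{i | c i = s} : ℤ))
      = ∑ t ∈ range z, (4 * ((#{i | c i = t} : ℤ) - 1) +
          if t < ν then 8 * ∑ s ∈ range t, (#{i | c i = s} : ℤ) else 0) := by
        rw [sum_range_four_mul_sub_one_add_ite _ hνz, hn]
    _ ≤ ∑ t ∈ range z, ((#(flipBlock w c t t) : ℤ) +
          ∑ s ∈ range t, ((#(flipBlock w c s t) : ℤ) + #(flipBlock w c t s))) :=
        sum_le_sum fun t _ => row_le_card_flipBlock hw hc hcyc hodd hsort t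
    _ ≤ 4 * (Lam w).ncard := by
        rw [← sum_range_sum_range_eq (fun s t => (#(flipBlock w c s t) : ℤ))]
        exact sum_sum_card_flipBlock_le hw hcz
  linarith

theorem stmt8_general {n z ν : ℕ} (hνz : ν ≤ z)
    (w : Equiv.Perm (Fin n × Bool)) (hw : IsSignedPerm w)
    (c : Fin n → ℕ) (hcz : ∀ i, c i < z)
    (hc1 : ∀ i : Fin n, c ((w (i, false)).1) = c i)
    (hc2 : ∀ i j : Fin n, c i = c j → ∃ m : ℕ, ((w ^ m) (i, false)).1 = j)
    (lam : ℕ → ℕ) (hlam : ∀ t, lam t = Set.ncard {i : Fin n | c i = t})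
    (hneg : ∀ t, t < z →
      (t < ν ↔ Odd (Set.ncard {i : Fin n | c i = t ∧ (w (i, false)).2 = true})))
    (hsort : ∀ s t, s ≤ t → t < ν → lam s ≤ lam t) :
    (n : ℤ) - z + 2 * ∑ j ∈ Finset.range (ν - 1), ((ν : ℤ) - 1 - j) * (lam j : ℤ)
      ≤ (Set.ncard (Lam w) : ℤ) := by
  have hlam' : ∀ t, lam t = #{i | c i = t} := fun t => by
    rw [hlam, Set.ncard_eq_toFinset_card', Set.toFinset_ofPred]
  rw [← sum_range_sum_range_lt]
  simp only [hlam'] at hsort ⊢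
  refine le_ncard_Lam hw hc1 (fun i j h => ?_) hcz hνz (fun t ht => ?_) hsort
  · exact (hc2 i j h).imp fun m hm => by rwa [hw.fst_pow_apply] at hm
  · simpa [Set.ncard_eq_toFinset_card'] using (hneg t (ht.trans_le hνz)).1 ht

/-- Lower bound for `|Λ(w)|` in terms of the signed cycle type of `w`.
The cycles of `w` are labelled `0, 1, …, z-1` by `c`, with the negative cycles
(those carrying an odd number of sign changes) labelled `0, …, ν-1` and their
lengths `lam 0 ≤ lam 1 ≤ ⋯ ≤ lam (ν-1)`.  (The paper's 1-indexed `λ_i` is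
`lam (i-1)`.) -/
theorem stmt8 {n z ν : ℕ} (hνz : ν ≤ z)
    (w : Equiv.Perm (Fin n × Bool)) (hw : IsSignedPerm w)
    (c : Fin n → ℕ) (hcz : ∀ i, c i < z)
    (hc1 : ∀ i : Fin n, c ((w (i, false)).1) = c i)
    (hc2 : ∀ i j : Fin n, c i = c j → ∃ m : ℕ, ((w ^ m) (i, false)).1 = j)
    (lam : ℕ → ℕ) (hlam : ∀ t, lam t = Set.ncard {i : Fin n | c i = t})
    (hnonempty : ∀ t, t < z → 1 ≤ lam t)
    (hneg : ∀ t, t < z →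
      (t < ν ↔ Odd (Set.ncard {i : Fin n | c i = t ∧ (w (i, false)).2 = true})))
    (hsort : ∀ s t, s ≤ t → t < ν → lam s ≤ lam t) :
    (n : ℤ) - z + 2 * ∑ j ∈ Finset.range (ν - 1), ((ν : ℤ) - 1 - j) * (lam j : ℤ)
      ≤ (Set.ncard (Lam w) : ℤ) :=
  stmt8_general hνz w hw c hcz hc1 hc2 lam hlam hneg hsort
end

section
/- Let k ≥ 1 and a ≥ 0 with a + k ≤ n. In the group of signed permutations of {1,...,n}, let w⁻ be the negative k-cycle sending a+i to −(a+i+1) for 1 ≤ i ≤ k−1 and a+k to −(a+1). Let σ = h_{[a,k]} (the map sending a+i to −(a+k+1−i) for 1 ≤ i ≤ k, fixing other points) and τ = g_{[a,k−1]} (the map reversing a+1,...,a+k−1 and fixing other points). Then σ and τ are involutions or the identity and w⁻ = στ. -/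
/-!
A signed permutation of `ℤ` is determined by its values on positive integers, where the three
identities are a direct computation: on the block `a+1, …, a+k` the map `σ` is
`x ↦ -(2a+k+1-x)`, on `a+1, …, a+k-1` the map `τ` is `x ↦ 2a+k-x`, so `σ τ` sends
`x ↦ -(x+1)` for `a < x < a+k`, while `τ` fixes `a+k` and `σ` sends it to `-(a+1)`.
-/

namespace Equiv.Perm

theorem eq_of_odd_of_eqOn_pos {u v : Perm ℤ} (hu : ∀ x, u (-x) = -u x)
    (hv : ∀ x, v (-x) = -v x) (h : ∀ x, 0 < x → u x = v x) : u = v := by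
  ext x
  rcases lt_trichotomy x 0 with hx | rfl | hx
  · rw [← neg_neg x, hu, hv, h (-x) (by omega)]
  · have hu0 := hu 0
    have hv0 := hv 0
    simp only [neg_zero] at hu0 hv0
    omega
  · exact h x hx

theorem mul_apply_neg_of_odd {σ τ : Perm ℤ} (hσ : ∀ x, σ (-x) = -σ x)
    (hτ : ∀ x, τ (-x) = -τ x) (x : ℤ) : (σ * τ) (-x) = -(σ * τ) x := by
  rw [mul_apply, mul_apply, hτ, hσ]

section Blocks

variable {a b : ℤ}

theorem mul_self_eq_one_of_neg_reverse {σ : Perm ℤ} (hodd : ∀ x, σ (-x) = -σ x)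
    (hrev : ∀ x, a < x → x ≤ b → σ x = -(a + b + 1 - x))
    (hfix : ∀ x, 0 < x → (x ≤ a ∨ b < x) → σ x = x) : σ * σ = 1 := by
  refine eq_of_odd_of_eqOn_pos (mul_apply_neg_of_odd hodd hodd) (fun _ => rfl)
    fun x hx => ?_
  rw [mul_apply, one_apply]
  by_cases hx' : a < x ∧ x ≤ b
  · rw [hrev x hx'.1 hx'.2, hodd, hrev _ (by omega) (by omega)]
    ring
  · have hout : x ≤ a ∨ b < x := by omega
    rw [hfix x hx hout, hfix x hx hout]

theorem mul_self_eq_one_of_reverse {τ : Perm ℤ} (hodd : ∀ x, τ (-x) = -τ x)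
    (hrev : ∀ x, a < x → x < b → τ x = a + b - x)
    (hfix : ∀ x, 0 < x → (x ≤ a ∨ b ≤ x) → τ x = x) : τ * τ = 1 := by
  refine eq_of_odd_of_eqOn_pos (mul_apply_neg_of_odd hodd hodd) (fun _ => rfl)
    fun x hx => ?_
  rw [mul_apply, one_apply]
  by_cases hx' : a < x ∧ x < b
  · rw [hrev x hx'.1 hx'.2, hrev _ (by omega) (by omega)]
    ring
  · have hout : x ≤ a ∨ b ≤ x := by omega
    rw [hfix x hx hout, hfix x hx hout]

theorem eq_neg_reverse_mul_reverse {w σ τ : Perm ℤ} (hwodd : ∀ x, w (-x) = -w x)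
    (hσodd : ∀ x, σ (-x) = -σ x) (hτodd : ∀ x, τ (-x) = -τ x)
    (hw : ∀ x, a < x → x < b → w x = -(x + 1)) (hwb : w b = -(a + 1))
    (hwfix : ∀ x, 0 < x → (x ≤ a ∨ b < x) → w x = x)
    (hσ : ∀ x, a < x → x ≤ b → σ x = -(a + b + 1 - x))
    (hσfix : ∀ x, 0 < x → (x ≤ a ∨ b < x) → σ x = x)
    (hτ : ∀ x, a < x → x < b → τ x = a + b - x)
    (hτfix : ∀ x, 0 < x → (x ≤ a ∨ b ≤ x) → τ x = x) : w = σ * τ := by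
  refine eq_of_odd_of_eqOn_pos hwodd (mul_apply_neg_of_odd hσodd hτodd) fun x hx => ?_
  rw [mul_apply]
  rcases lt_or_ge a x with hax | hxa
  · rcases lt_trichotomy x b with hxb | rfl | hbx
    · rw [hw x hax hxb, hτ x hax hxb, hσ _ (by omega) (by omega)]
      ring
    · rw [hτfix x hx (Or.inr le_rfl), hσ x hax le_rfl, hwb]
      ring
    · rw [hwfix x hx (Or.inr hbx), hτfix x hx (Or.inr hbx.le), hσfix x hx (Or.inr hbx)]
  · rw [hwfix x hx (Or.inl hxa), hτfix x hx (Or.inl hxa), hσfix x hx (Or.inl hxa)]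

end Blocks

end Equiv.Perm

theorem Int.forall_Ioc_of_forall_nat_add {a : ℤ} {m : ℕ} {P : ℤ → Prop}
    (h : ∀ i : ℕ, 1 ≤ i → i ≤ m → P (a + i)) {x : ℤ} (hax : a < x) (hxm : x ≤ a + m) :
    P x := by
  obtain ⟨i, rfl⟩ : ∃ i : ℕ, x = a + i := ⟨(x - a).toNat, by omega⟩
  exact h i (by omega) (by omega)

open Equiv.Perm in
theorem stmt12_general (k a : ℕ)
    (w σ τ : Equiv.Perm ℤ)
    (hwodd : ∀ x : ℤ, w (-x) = -w x)
    (hσodd : ∀ x : ℤ, σ (-x) = -σ x)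
    (hτodd : ∀ x : ℤ, τ (-x) = -τ x)
    -- w⁻ sends a+i to -(a+i+1) for 1 ≤ i ≤ k-1, and a+k to -(a+1)
    (hw1 : ∀ i : ℕ, 1 ≤ i → i ≤ k - 1 → w ((a : ℤ) + i) = -((a : ℤ) + i + 1))
    (hw2 : w ((a : ℤ) + k) = -((a : ℤ) + 1))
    (hwfix : ∀ x : ℤ, 0 < x → (x ≤ (a : ℤ) ∨ (a : ℤ) + k < x) → w x = x)
    -- σ = h_{[a,k]} sends a+i to -(a+k+1-i) for 1 ≤ i ≤ k
    (hσ : ∀ i : ℕ, 1 ≤ i → i ≤ k → σ ((a : ℤ) + i) = -((a : ℤ) + k + 1 - i))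
    (hσfix : ∀ x : ℤ, 0 < x → (x ≤ (a : ℤ) ∨ (a : ℤ) + k < x) → σ x = x)
    -- τ = g_{[a,k-1]} reverses a+1, …, a+k-1
    (hτ : ∀ i : ℕ, 1 ≤ i → i ≤ k - 1 → τ ((a : ℤ) + i) = (a : ℤ) + k - i)
    (hτfix : ∀ x : ℤ, 0 < x → (x ≤ (a : ℤ) ∨ (a : ℤ) + k ≤ x) → τ x = x) :
    σ * σ = 1 ∧ τ * τ = 1 ∧ w = σ * τ := by
  have hσ' : ∀ x, (a : ℤ) < x → x ≤ a + k → σ x = -(a + (a + k) + 1 - x) := fun x hax hxk =>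
    Int.forall_Ioc_of_forall_nat_add (P := fun x => σ x = -(a + (a + k) + 1 - x))
      (fun i hi hik => by rw [hσ i hi hik]; ring) hax hxk
  have hτ' : ∀ x, (a : ℤ) < x → x < a + k → τ x = a + (a + k) - x := fun x hax hxk =>
    Int.forall_Ioc_of_forall_nat_add (P := fun x => τ x = a + (a + k) - x) (m := k - 1)
      (fun i hi hik => by rw [hτ i hi hik]; ring) hax (by omega)
  have hw' : ∀ x, (a : ℤ) < x → x < a + k → w x = -(x + 1) := fun x hax hxk =>
    Int.forall_Ioc_of_forall_nat_add (P := fun x => w x = -(x + 1)) (m := k - 1)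
      (fun i hi hik => by rw [hw1 i hi hik, add_assoc]) hax (by omega)
  exact ⟨mul_self_eq_one_of_neg_reverse hσodd hσ' hσfix,
    mul_self_eq_one_of_reverse hτodd hτ' hτfix,
    eq_neg_reverse_mul_reverse hwodd hσodd hτodd hw' hw2 hwfix hσ' hσfix hτ' hτfix⟩

/-- Factorisation of the negative cycle `w⁻ = (-(a+1), …, -(a+k))` as
`σ τ` with `σ = h_{[a,k]}` and `τ = g_{[a,k-1]}`.  Signed permutations of
`{1, …, n}` are modelled as permutations `u` of `ℤ` with `u (-x) = -u x`
(hence fixing `0` and everything outside `±{1, …, n}`). -/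
theorem stmt12 (n k a : ℕ) (hk : 1 ≤ k) (hak : a + k ≤ n)
    (w σ τ : Equiv.Perm ℤ)
    (hwodd : ∀ x : ℤ, w (-x) = -w x)
    (hσodd : ∀ x : ℤ, σ (-x) = -σ x)
    (hτodd : ∀ x : ℤ, τ (-x) = -τ x)
    -- w⁻ sends a+i to -(a+i+1) for 1 ≤ i ≤ k-1, and a+k to -(a+1)
    (hw1 : ∀ i : ℕ, 1 ≤ i → i ≤ k - 1 → w ((a : ℤ) + i) = -((a : ℤ) + i + 1))
    (hw2 : w ((a : ℤ) + k) = -((a : ℤ) + 1))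
    (hwfix : ∀ x : ℤ, 0 < x → (x ≤ (a : ℤ) ∨ (a : ℤ) + k < x) → w x = x)
    -- σ = h_{[a,k]} sends a+i to -(a+k+1-i) for 1 ≤ i ≤ k
    (hσ : ∀ i : ℕ, 1 ≤ i → i ≤ k → σ ((a : ℤ) + i) = -((a : ℤ) + k + 1 - i))
    (hσfix : ∀ x : ℤ, 0 < x → (x ≤ (a : ℤ) ∨ (a : ℤ) + k < x) → σ x = x)
    -- τ = g_{[a,k-1]} reverses a+1, …, a+k-1
    (hτ : ∀ i : ℕ, 1 ≤ i → i ≤ k - 1 → τ ((a : ℤ) + i) = (a : ℤ) + k - i)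
    (hτfix : ∀ x : ℤ, 0 < x → (x ≤ (a : ℤ) ∨ (a : ℤ) + k ≤ x) → τ x = x) :
    σ * σ = 1 ∧ τ * τ = 1 ∧ w = σ * τ :=
  stmt12_general k a w σ τ hwodd hσodd hτodd hw1 hw2 hwfix hσ hσfix hτ hτfix
end

section
/- Every element of the hyperoctahedral group B_n (signed permutations of {1,...,n}) can be written as a product of two elements each of which is an involution or the identity. -/
/-!
`B_n` is the centralizer of the sign flip `f` in the symmetric group of `Fin n × Bool`, so for
`w ∈ B_n` the group `⟨w, f⟩` is abelian. For any abelian group acting on a set, choosing a base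
point `r` in every orbit, the map `g • r ↦ g⁻¹ • r` is a well-defined involution `T` with
`T (g • x) = g⁻¹ • T x`. Hence `T w T = w⁻¹` and `T f T = f`, and `w = (w T) T` writes `w` as a
product of two involutions commuting with `f`.
-/

namespace MulAction

variable {G α : Type*} [Group G] [MulAction G α]

theorem inv_smul_eq_inv_smul_of_smul_eq [IsMulCommutative G] {g h : G} {x : α}
    (hgh : g • x = h • x) : g⁻¹ • x = h⁻¹ • x :=
  calc g⁻¹ • x = (g⁻¹ * h⁻¹) • h • x := by rw [smul_smul, inv_mul_cancel_right]
    _ = (h⁻¹ * g⁻¹) • g • x := by rw [← hgh, mul_comm' g⁻¹]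
    _ = h⁻¹ • x := by rw [smul_smul, inv_mul_cancel_right]

variable (G) in
noncomputable def orbitBase (x : α) : α :=
  (Quotient.mk'' x : orbitRel.Quotient G α).out

theorem exists_smul_orbitBase_eq (x : α) : ∃ g : G, g • orbitBase G x = x := by
  obtain ⟨g, hg⟩ := (orbitRel_apply.1 (Quotient.mk_out' (s₁ := orbitRel G α) x))
  exact ⟨g⁻¹, inv_smul_eq_iff.2 hg.symm⟩

theorem orbitBase_smul (g : G) (x : α) : orbitBase G (g • x) = orbitBase G x := by
  unfold orbitBase
  rw [Quotient.sound' (mem_orbit x g)]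

theorem orbitBase_orbitBase (x : α) : orbitBase G (orbitBase G x) = orbitBase G x := by
  obtain ⟨g, hg⟩ := exists_smul_orbitBase_eq (G := G) x
  calc orbitBase G (orbitBase G x) = orbitBase G (g • orbitBase G x) := (orbitBase_smul g _).symm
    _ = orbitBase G x := by rw [hg]

variable (G) in
/-- `g • r ↦ g⁻¹ • r` on the orbit of its base point `r`; independent of the choice of `g` once
`G` is abelian, by `inv_smul_eq_inv_smul_of_smul_eq`. -/
noncomputable def orbitInversion (x : α) : α :=
  (exists_smul_orbitBase_eq (G := G) x).choose⁻¹ • orbitBase G x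

variable [IsMulCommutative G]

theorem orbitInversion_eq_of_smul_eq {g : G} {x : α} (hg : g • orbitBase G x = x) :
    orbitInversion G x = g⁻¹ • orbitBase G x :=
  inv_smul_eq_inv_smul_of_smul_eq ((exists_smul_orbitBase_eq x).choose_spec.trans hg.symm)

theorem orbitInversion_smul (g : G) (x : α) :
    orbitInversion G (g • x) = g⁻¹ • orbitInversion G x := by
  obtain ⟨h, hh⟩ := exists_smul_orbitBase_eq (G := G) x
  have hgh : (g * h) • orbitBase G (g • x) = g • x := by rw [orbitBase_smul, mul_smul, hh]
  rw [orbitInversion_eq_of_smul_eq hgh, orbitInversion_eq_of_smul_eq hh, orbitBase_smul,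
    mul_inv_rev, mul_comm', mul_smul]

theorem orbitInversion_involutive : Function.Involutive (orbitInversion G (α := α)) := by
  intro x
  obtain ⟨h, hh⟩ := exists_smul_orbitBase_eq (G := G) x
  have hbase : h⁻¹ • orbitBase G (orbitInversion G x) = orbitInversion G x := by
    rw [orbitInversion_eq_of_smul_eq hh, orbitBase_smul, orbitBase_orbitBase]
  rw [orbitInversion_eq_of_smul_eq hbase, inv_inv, orbitInversion_eq_of_smul_eq hh,
    orbitBase_smul, orbitBase_orbitBase, hh]

end MulAction

namespace Equiv.Perm

variable {α : Type*}

theorem exists_involution_conj_eq_inv_of_commute {w f : Perm α} (hwf : Commute w f) :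
    ∃ T : Perm α, T * T = 1 ∧ T * w * T = w⁻¹ ∧ T * f * T = f⁻¹ := by
  let H := Subgroup.closure {w, f}
  have : IsMulCommutative H := Subgroup.isMulCommutative_closure <| by
    rintro _ (rfl | rfl) _ (rfl | rfl)
    exacts [rfl, hwf, hwf.symm, rfl]
  let T : Perm α := (MulAction.orbitInversion_involutive (G := H)).toPerm
  have hT (g : H) : T * g * T = (g : Perm α)⁻¹ := by
    ext x
    change MulAction.orbitInversion H (g • MulAction.orbitInversion H x) = g⁻¹ • x
    rw [MulAction.orbitInversion_smul, MulAction.orbitInversion_involutive]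
  exact ⟨T, Perm.ext (MulAction.orbitInversion_involutive (G := H)),
    hT ⟨w, Subgroup.subset_closure (by simp)⟩, hT ⟨f, Subgroup.subset_closure (by simp)⟩⟩

theorem exists_involutions_commute_mul_eq {w f : Perm α} (hwf : Commute w f) (hf : f * f = 1) :
    ∃ σ τ : Perm α, Commute σ f ∧ Commute τ f ∧ σ * σ = 1 ∧ τ * τ = 1 ∧ w = σ * τ := by
  obtain ⟨T, hTT, hTw, hTf⟩ := exists_involution_conj_eq_inv_of_commute hwf
  have hTf_comm : Commute T f :=
    calc T * f = T * f * T * T := by rw [mul_assoc _ T, hTT, mul_one]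
      _ = f * T := by rw [hTf, ← eq_inv_of_mul_eq_one_left hf]
  refine ⟨w * T, T, hwf.mul_left hTf_comm, hTf_comm, ?_, hTT, by rw [mul_assoc, hTT, mul_one]⟩
  calc w * T * (w * T) = w * (T * w * T) := by simp only [mul_assoc]
    _ = 1 := by rw [hTw, mul_inv_cancel]

end Equiv.Perm

/-- Every element of the hyperoctahedral group `B_n` (modelled as permutations
of `Fin n × Bool` commuting with the sign flip `(i, s) ↦ (i, !s)`) is a product
of two elements each of which is an involution or the identity. -/
theorem stmt14 (n : ℕ) (w : Equiv.Perm (Fin n × Bool))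
    (hw : ∀ p : Fin n × Bool, w (p.1, !p.2) = ((w p).1, !(w p).2)) :
    ∃ σ τ : Equiv.Perm (Fin n × Bool),
      (∀ p : Fin n × Bool, σ (p.1, !p.2) = ((σ p).1, !(σ p).2)) ∧
      (∀ p : Fin n × Bool, τ (p.1, !p.2) = ((τ p).1, !(τ p).2)) ∧
      σ * σ = 1 ∧ τ * τ = 1 ∧ w = σ * τ := by
  let signFlip : Equiv.Perm (Fin n × Bool) := Equiv.prodCongr (Equiv.refl _) Equiv.boolNot
  have hsignFlip : signFlip * signFlip = 1 := by ext p <;> simp [signFlip]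
  obtain ⟨σ, τ, hσ, hτ, hσσ, hττ, hwστ⟩ :=
    Equiv.Perm.exists_involutions_commute_mul_eq (Equiv.ext hw) hsignFlip
  exact ⟨σ, τ, Equiv.congr_fun hσ, Equiv.congr_fun hτ, hσσ, hττ, hwστ⟩
end
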